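/- arXiv:1709.05367 — 2 statements merged into one kernel-verified Lean document; each statement's English description precedes it below -/
import Mathlib

section
/- Let Z = ∂/∂z + i z̄ ∂/∂u and Z̄ = ∂/∂z̄ − i z ∂/∂u, and let P₃ := Z Z Z̄. For (z,u) ≠ (0,0), P₃(log(|z|⁴ + u²)) = 0. Equivalently, P₃(log ρ) = 0 where ρ = (|z|⁴+u²)^{1/4}. -/
open Complex

/-- The CR vector field Z = ∂/∂z + i z̄ ∂/∂u on the Heisenberg group ℂ × ℝ,
where ∂/∂z = ½(∂/∂x − i ∂/∂y) is the Wirtinger derivative. -/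
noncomputable def Zop (f : ℂ × ℝ → ℂ) : ℂ × ℝ → ℂ := fun p =>
  (1 / 2 : ℂ) * (fderiv ℝ f p (1, 0) - Complex.I * fderiv ℝ f p (Complex.I, 0))
    + Complex.I * (starRingEnd ℂ p.1) * fderiv ℝ f p (0, 1)

/-- The CR vector field Z̄ = ∂/∂z̄ − i z ∂/∂u on the Heisenberg group ℂ × ℝ,
where ∂/∂z̄ = ½(∂/∂x + i ∂/∂y). -/
noncomputable def Zbar (f : ℂ × ℝ → ℂ) : ℂ × ℝ → ℂ := fun p =>
  (1 / 2 : ℂ) * (fderiv ℝ f p (1, 0) + Complex.I * fderiv ℝ f p (Complex.I, 0))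
    - Complex.I * p.1 * fderiv ℝ f p (0, 1)

/-- The vector field T = ∂/∂u. -/
noncomputable def Tder (f : ℂ × ℝ → ℂ) : ℂ × ℝ → ℂ := fun p => fderiv ℝ f p (0, 1)

/-- The sublaplacian Δ_b = Z Z̄ + Z̄ Z. -/
noncomputable def Lapb (f : ℂ × ℝ → ℂ) : ℂ × ℝ → ℂ := fun p =>
  Zop (Zbar f) p + Zbar (Zop f) p

/-!
Write `A = |z|² + i u`, so that `|z|⁴ + u² = A Ā`. Both `Z` and `Z̄` are complex vector fields, hence
derivations obeying the chain rule for holomorphic functions, and on the coordinates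
`Z z = 1`, `Z A = 0`, `Z̄ A = 2 z`, `Z̄ Ā = 0`. Therefore
`Z̄ log (A Ā) = Z̄ A / A = 2 z / A`, then `Z (2 z / A) = 2 / A`, and finally `Z (2 / A) = 0`.
Away from the origin `log ρ = ¼ log (A Ā)`, so the second identity is a multiple of the first.
-/

open ComplexConjugate

/-- The complex vector field `a ∂ₓ + b ∂_y + c ∂ᵤ` on `ℂ × ℝ`, where `z = x + i y`. -/
noncomputable def vecField (a b c : ℂ × ℝ → ℂ) (f : ℂ × ℝ → ℂ) (p : ℂ × ℝ) : ℂ :=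
  a p * fderiv ℝ f p (1, 0) + b p * fderiv ℝ f p (I, 0) + c p * fderiv ℝ f p (0, 1)

section VecField

variable {a b c f g : ℂ × ℝ → ℂ} {p : ℂ × ℝ}

theorem vecField_const_mul (k : ℂ) :
    vecField a b c (fun q => k * f q) p = k * vecField a b c f p := by
  have h : fderiv ℝ (fun q => k * f q) p = k • fderiv ℝ f p :=
    congrFun (fderiv_const_smul_field (f := f) k) p
  simp only [vecField, h, smul_apply, smul_eq_mul]
  ring

theorem vecField_add (hf : DifferentiableAt ℝ f p) (hg : DifferentiableAt ℝ g p) :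
    vecField a b c (fun q => f q + g q) p = vecField a b c f p + vecField a b c g p := by
  simp only [vecField, fderiv_fun_add hf hg, add_apply]
  ring

theorem vecField_mul (hf : DifferentiableAt ℝ f p) (hg : DifferentiableAt ℝ g p) :
    vecField a b c (fun q => f q * g q) p = f p * vecField a b c g p + g p * vecField a b c f p := by
  simp only [vecField, fderiv_fun_mul hf hg, add_apply, smul_apply, smul_eq_mul]
  ring

theorem vecField_comp {h : ℂ → ℂ} (hh : DifferentiableAt ℂ h (f p)) (hf : DifferentiableAt ℝ f p) :
    vecField a b c (fun q => h (f q)) p = deriv h (f p) * vecField a b c f p := by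
  have hd := (hh.hasDerivAt.comp_hasFDerivAt p hf.hasFDerivAt).fderiv
  simp only [vecField, Function.comp_def] at hd ⊢
  simp only [hd, smul_apply, smul_eq_mul]
  ring

theorem vecField_fst : vecField a b c (fun q => q.1) p = a p + b p * I := by
  simp [vecField, fderiv_fst]

theorem vecField_conj_fst : vecField a b c (fun q => conj q.1) p = a p - b p * I := by
  have h : HasFDerivAt (fun q : ℂ × ℝ => conj q.1) ((conjCLE : ℂ →L[ℝ] ℂ).comp (.fst ℝ ℂ ℝ)) p :=
    conjCLE.hasFDerivAt.comp p hasFDerivAt_fst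
  simp [vecField, h.fderiv]
  ring

theorem vecField_ofReal_snd : vecField a b c (fun q => (q.2 : ℂ)) p = c p := by
  have h : HasFDerivAt (fun q : ℂ × ℝ => (q.2 : ℂ)) (ofRealCLM.comp (.snd ℝ ℂ ℝ)) p :=
    ofRealCLM.hasFDerivAt.comp p hasFDerivAt_snd
  simp [vecField, h.fderiv]

end VecField

theorem Zop_eq_vecField :
    Zop = vecField (fun _ => 1 / 2) (fun _ => -I / 2) (fun p => I * conj p.1) := by
  ext f p
  simp only [Zop, vecField]
  ring

theorem Zbar_eq_vecField :
    Zbar = vecField (fun _ => 1 / 2) (fun _ => I / 2) (fun p => -I * p.1) := by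
  ext f p
  simp only [Zbar, vecField]
  ring

noncomputable def P3 (f : ℂ × ℝ → ℂ) : ℂ × ℝ → ℂ := Zop (Zop (Zbar f))

/-- `A = |z|² + i u`, whose modulus is `ρ²`. -/
noncomputable def koranyiGauge (q : ℂ × ℝ) : ℂ := q.1 * conj q.1 + I * q.2

section

variable {p : ℂ × ℝ}

theorem Zop_const_mul (k : ℂ) (f : ℂ × ℝ → ℂ) : Zop (fun q => k * f q) p = k * Zop f p := by
  rw [Zop_eq_vecField, vecField_const_mul]

theorem Zbar_const_mul (k : ℂ) (f : ℂ × ℝ → ℂ) : Zbar (fun q => k * f q) p = k * Zbar f p := by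
  rw [Zbar_eq_vecField, vecField_const_mul]

theorem Zop_congr {f g : ℂ × ℝ → ℂ} (h : f =ᶠ[nhds p] g) : Zop f p = Zop g p := by
  simp only [Zop, h.fderiv_eq]

theorem P3_const_mul (k : ℂ) (f : ℂ × ℝ → ℂ) : P3 (fun q => k * f q) p = k * P3 f p := by
  simp only [P3, funext fun q => Zbar_const_mul (p := q) k f,
    funext fun q => Zop_const_mul (p := q) k (Zbar f), Zop_const_mul]

theorem differentiableAt_koranyiGauge : DifferentiableAt ℝ koranyiGauge p := by
  unfold koranyiGauge
  fun_prop

theorem koranyiGauge_eq (q : ℂ × ℝ) : koranyiGauge q = ⟨‖q.1‖ ^ 2, q.2⟩ := by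
  apply Complex.ext <;> simp [koranyiGauge, ← normSq_eq_norm_sq, normSq_apply]
  ring

theorem koranyiGauge_mul_conj (q : ℂ × ℝ) :
    koranyiGauge q * conj (koranyiGauge q) = ((‖q.1‖ ^ 4 + q.2 ^ 2 : ℝ) : ℂ) := by
  rw [mul_conj, normSq_apply, koranyiGauge_eq]
  push_cast
  ring

theorem koranyiGauge_ne_zero (hp : p ≠ 0) : koranyiGauge p ≠ 0 := by
  intro h
  rw [koranyiGauge_eq] at h
  have hz : ‖p.1‖ ^ 2 = 0 := congrArg re h
  have hu : p.2 = 0 := congrArg im h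
  exact hp (Prod.ext (by simpa using hz) hu)

theorem Zop_koranyiGauge : Zop koranyiGauge p = 0 := by
  unfold koranyiGauge
  rw [Zop_eq_vecField, vecField_add (by fun_prop) (by fun_prop),
    vecField_mul (by fun_prop) (by fun_prop), vecField_const_mul, vecField_fst,
    vecField_conj_fst, vecField_ofReal_snd]
  linear_combination (p.1 + conj p.1) / 2 * I_sq

theorem Zbar_koranyiGauge : Zbar koranyiGauge p = 2 * p.1 := by
  unfold koranyiGauge
  rw [Zbar_eq_vecField, vecField_add (by fun_prop) (by fun_prop),
    vecField_mul (by fun_prop) (by fun_prop), vecField_const_mul, vecField_fst,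
    vecField_conj_fst, vecField_ofReal_snd]
  linear_combination (conj p.1 - 3 * p.1) / 2 * I_sq

theorem Zbar_conj_koranyiGauge : Zbar (fun q => conj (koranyiGauge q)) p = 0 := by
  have h : (fun q => conj (koranyiGauge q)) = fun q => conj q.1 * q.1 + -I * q.2 := by
    ext q
    simp [koranyiGauge, mul_comm]
  rw [h, Zbar_eq_vecField, vecField_add (by fun_prop) (by fun_prop),
    vecField_mul (by fun_prop) (by fun_prop), vecField_const_mul, vecField_fst,
    vecField_conj_fst, vecField_ofReal_snd]
  linear_combination (p.1 + conj p.1) / 2 * I_sq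

theorem Zop_comp_koranyiGauge {h : ℂ → ℂ} (hh : DifferentiableAt ℂ h (koranyiGauge p)) :
    Zop (fun q => h (koranyiGauge q)) p = 0 := by
  rw [Zop_eq_vecField, vecField_comp hh differentiableAt_koranyiGauge, ← Zop_eq_vecField,
    Zop_koranyiGauge, mul_zero]

theorem Zop_fst_mul_comp_koranyiGauge {h : ℂ → ℂ} (hh : DifferentiableAt ℂ h (koranyiGauge p)) :
    Zop (fun q => q.1 * h (koranyiGauge q)) p = h (koranyiGauge p) := by
  have hhA : DifferentiableAt ℝ (fun q => h (koranyiGauge q)) p :=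
    (hh.restrictScalars ℝ).comp p differentiableAt_koranyiGauge
  rw [Zop_eq_vecField, vecField_mul (by fun_prop) hhA, ← Zop_eq_vecField, Zop_comp_koranyiGauge hh,
    Zop_eq_vecField, vecField_fst]
  linear_combination (-h (koranyiGauge p) / 2) * I_sq

theorem Zbar_log_koranyi (hp : p ≠ 0) :
    Zbar (fun q => ((Real.log (‖q.1‖ ^ 4 + q.2 ^ 2) : ℝ) : ℂ)) p
      = 2 * (p.1 * (koranyiGauge p)⁻¹) := by
  have hA := koranyiGauge_ne_zero hp
  have hlog : (fun q : ℂ × ℝ => ((Real.log (‖q.1‖ ^ 4 + q.2 ^ 2) : ℝ) : ℂ))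
      = fun q => log (koranyiGauge q * conj (koranyiGauge q)) := by
    ext q
    rw [koranyiGauge_mul_conj, ofReal_log (by positivity)]
  have hslit : koranyiGauge p * conj (koranyiGauge p) ∈ slitPlane := by
    rw [mul_conj]
    exact ofReal_mem_slitPlane.2 (normSq_pos.2 hA)
  have hdA : DifferentiableAt ℝ koranyiGauge p := differentiableAt_koranyiGauge
  have hdA' : DifferentiableAt ℝ (fun q => conj (koranyiGauge q)) p :=
    conjCLE.differentiableAt.comp p hdA
  rw [hlog, Zbar_eq_vecField, vecField_comp (differentiableAt_log hslit) (by fun_prop),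
    deriv_log hslit, vecField_mul hdA hdA', ← Zbar_eq_vecField,
    Zbar_koranyiGauge, Zbar_conj_koranyiGauge, mul_zero, zero_add]
  field_simp [(map_ne_zero _).2 hA]

theorem Zop_Zbar_log_koranyi (hp : p ≠ 0) :
    Zop (Zbar (fun q => ((Real.log (‖q.1‖ ^ 4 + q.2 ^ 2) : ℝ) : ℂ))) p
      = 2 * (koranyiGauge p)⁻¹ := by
  rw [Zop_congr ((eventually_ne_nhds hp).mono fun q hq => Zbar_log_koranyi hq), Zop_const_mul,
    Zop_fst_mul_comp_koranyiGauge (differentiableAt_inv (koranyiGauge_ne_zero hp))]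

theorem P3_log_koranyi (hp : p ≠ 0) :
    P3 (fun q => ((Real.log (‖q.1‖ ^ 4 + q.2 ^ 2) : ℝ) : ℂ)) p = 0 := by
  rw [P3, Zop_congr ((eventually_ne_nhds hp).mono fun q hq => Zop_Zbar_log_koranyi hq),
    Zop_const_mul, Zop_comp_koranyiGauge (differentiableAt_inv (koranyiGauge_ne_zero hp)),
    mul_zero]

end

/-- For (z,u) ≠ (0,0): P₃(log(|z|⁴+u²)) = 0 where P₃ = Z Z Z̄;
equivalently P₃(log ρ) = 0 with ρ = (|z|⁴+u²)^{1/4}. -/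
theorem P3_log_rho_vanishes (p : ℂ × ℝ) (hp : p ≠ 0) :
    Zop (Zop (Zbar (fun q =>
        ((Real.log (‖q.1‖ ^ 4 + q.2 ^ 2) : ℝ) : ℂ)))) p = 0 ∧
    Zop (Zop (Zbar (fun q =>
        ((Real.log ((‖q.1‖ ^ 4 + q.2 ^ 2) ^ ((1 : ℝ) / 4)) : ℝ) : ℂ)))) p = 0 := by
  have hrho : (fun q : ℂ × ℝ => ((Real.log ((‖q.1‖ ^ 4 + q.2 ^ 2) ^ ((1 : ℝ) / 4)) : ℝ) : ℂ))
      = fun q => (1 / 4 : ℂ) * ((Real.log (‖q.1‖ ^ 4 + q.2 ^ 2) : ℝ) : ℂ) := by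
    ext q
    rcases (by positivity : (0 : ℝ) ≤ ‖q.1‖ ^ 4 + q.2 ^ 2).eq_or_lt with h | h
    · simp [← h]
    · rw [Real.log_rpow h]
      push_cast
      ring
  refine ⟨P3_log_koranyi hp, ?_⟩
  change P3 _ p = 0
  rw [hrho, P3_const_mul, P3_log_koranyi hp, mul_zero]
end

section
/- Let Z = ∂/∂z + i z̄ ∂/∂u. For (z,u) ≠ (0,0), the function h(z,u) = 1/(|z|² + iu) satisfies Z h = 0, and consequently Z(Z(Z̄(log(|z|⁴ + u²)))) = 0, where Z̄ = ∂/∂z̄ − i z ∂/∂u. -/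
open Complex

/-!
Write `w = |z|² + iu`. Then `Z w = z̄ + i z̄ · i = 0` and `Z̄ w = z + (-i z) · i = 2z`, so
`Z w⁻¹ = 0` by the chain rule. Since `|z|⁴ + u² = w w̄` and `Z̄ w̄ = conj (Z w) = 0`, the chain rule
gives `Z̄ log(|z|⁴ + u²) = Z̄ w / w = 2z w⁻¹`, hence `Z Z̄ log(|z|⁴ + u²) = 2 w⁻¹` (as `Z z = 1`),
which `Z` annihilates. Both `Z` and `Z̄` are a `ℂ`-linear functional applied to the real
differential, and this gives them the Leibniz and chain rules at once.
-/

open ComplexConjugate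

section FDerivOp

variable {E : Type*} [NormedAddCommGroup E] [NormedSpace ℝ E]
  (Λ : E → (E →L[ℝ] ℂ) →ₗ[ℂ] ℂ) {f g : E → ℂ} {p : E}

noncomputable def fderivOp (f : E → ℂ) (p : E) : ℂ := Λ p (fderiv ℝ f p)

theorem fderivOp_congr (h : f =ᶠ[nhds p] g) : fderivOp Λ f p = fderivOp Λ g p := by
  rw [fderivOp, h.fderiv_eq, fderivOp]

theorem fderivOp_clm (ℓ : E →L[ℝ] ℂ) : fderivOp Λ (fun q => ℓ q) p = Λ p ℓ := by
  rw [fderivOp, ℓ.fderiv]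

theorem fderivOp_add (hf : DifferentiableAt ℝ f p) (hg : DifferentiableAt ℝ g p) :
    fderivOp Λ (fun q => f q + g q) p = fderivOp Λ f p + fderivOp Λ g p := by
  rw [fderivOp, fderiv_fun_add hf hg, map_add, fderivOp, fderivOp]

theorem fderivOp_mul (hf : DifferentiableAt ℝ f p) (hg : DifferentiableAt ℝ g p) :
    fderivOp Λ (fun q => f q * g q) p = f p * fderivOp Λ g p + g p * fderivOp Λ f p := by
  rw [fderivOp, fderiv_fun_mul hf hg, map_add, map_smul, map_smul, fderivOp, fderivOp, smul_eq_mul,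
    smul_eq_mul]

theorem fderivOp_const_mul (hf : DifferentiableAt ℝ f p) (c : ℂ) :
    fderivOp Λ (fun q => c * f q) p = c * fderivOp Λ f p := by
  rw [fderivOp, fderiv_const_mul hf, map_smul, smul_eq_mul, fderivOp]

theorem fderivOp_comp {φ : ℂ → ℂ} {φ' : ℂ} (hφ : HasDerivAt φ φ' (f p))
    (hf : DifferentiableAt ℝ f p) :
    fderivOp Λ (fun q => φ (f q)) p = φ' * fderivOp Λ f p := by
  rw [fderivOp, HasFDerivAt.fderiv (f := fun q => φ (f q)) (hφ.comp_hasFDerivAt p hf.hasFDerivAt),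
     map_smul, smul_eq_mul, fderivOp]

end FDerivOp

noncomputable def Zvec (p : ℂ × ℝ) : (ℂ × ℝ →L[ℝ] ℂ) →ₗ[ℂ] ℂ where
  toFun L := (1 / 2 : ℂ) * (L (1, 0) - I * L (I, 0)) + I * conj p.1 * L (0, 1)
  map_add' L M := by simp only [add_apply]; ring
  map_smul' c L := by simp only [smul_apply, smul_eq_mul, RingHom.id_apply]; ring

noncomputable def Zbarvec (p : ℂ × ℝ) : (ℂ × ℝ →L[ℝ] ℂ) →ₗ[ℂ] ℂ where
  toFun L := (1 / 2 : ℂ) * (L (1, 0) + I * L (I, 0)) - I * p.1 * L (0, 1)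
  map_add' L M := by simp only [add_apply]; ring
  map_smul' c L := by simp only [smul_apply, smul_eq_mul, RingHom.id_apply]; ring

theorem Zop_eq_fderivOp (f : ℂ × ℝ → ℂ) (p : ℂ × ℝ) : Zop f p = fderivOp Zvec f p := rfl

theorem Zbar_eq_fderivOp (f : ℂ × ℝ → ℂ) (p : ℂ × ℝ) :
    Zbar f p = fderivOp Zbarvec f p := rfl

theorem Zop_conj {f : ℂ × ℝ → ℂ} {p : ℂ × ℝ} :
    Zop (fun q => conj (f q)) p = conj (Zbar f p) := by
  have h : fderiv ℝ (fun q => conj (f q)) p = _ := fderiv_star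
  simp only [Zbar, Zop, h, ContinuousLinearMap.comp_apply, ContinuousLinearEquiv.coe_coe,
    starL'_apply, RCLike.star_def, map_add, map_sub, map_mul, map_div₀, map_one, map_ofNat, conj_I]
  ring

theorem Zbar_conj {f : ℂ × ℝ → ℂ} {p : ℂ × ℝ} :
    Zbar (fun q => conj (f q)) p = conj (Zop f p) := by
  have h : fderiv ℝ (fun q => conj (f q)) p = _ := fderiv_star
  simp only [Zbar, Zop, h, ContinuousLinearMap.comp_apply, ContinuousLinearEquiv.coe_coe,
    starL'_apply, RCLike.star_def, map_add, map_sub, map_mul, map_div₀, map_one, map_ofNat, conj_I,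
    conj_conj]
  ring

theorem Zop_fst (p : ℂ × ℝ) : Zop (fun q => q.1) p = 1 :=
  (fderivOp_clm Zvec (ContinuousLinearMap.fst ℝ ℂ ℝ)).trans (by simp [Zvec]; norm_num)

theorem Zbar_fst (p : ℂ × ℝ) : Zbar (fun q => q.1) p = 0 :=
  (fderivOp_clm Zbarvec (ContinuousLinearMap.fst ℝ ℂ ℝ)).trans (by simp [Zbarvec])

theorem Zop_ofReal_snd (p : ℂ × ℝ) : Zop (fun q => (q.2 : ℂ)) p = I * conj p.1 :=
  (fderivOp_clm Zvec (ofRealCLM ∘L ContinuousLinearMap.snd ℝ ℂ ℝ)).trans (by simp [Zvec])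

theorem Zbar_ofReal_snd (p : ℂ × ℝ) : Zbar (fun q => (q.2 : ℂ)) p = -(I * p.1) :=
  (fderivOp_clm Zbarvec (ofRealCLM ∘L ContinuousLinearMap.snd ℝ ℂ ℝ)).trans (by simp [Zbarvec])

noncomputable def complexGauge (q : ℂ × ℝ) : ℂ := ((‖q.1‖ : ℝ) : ℂ) ^ 2 + I * (q.2 : ℂ)

theorem complexGauge_eq (q : ℂ × ℝ) : complexGauge q = q.1 * conj q.1 + I * q.2 := by
  rw [complexGauge, mul_conj']

@[fun_prop]
theorem differentiable_complexGauge : Differentiable ℝ complexGauge := by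
  rw [show complexGauge = fun q => q.1 * conj q.1 + I * q.2 from funext complexGauge_eq]
  fun_prop

theorem fderivOp_complexGauge (Λ : ℂ × ℝ → (ℂ × ℝ →L[ℝ] ℂ) →ₗ[ℂ] ℂ) (p : ℂ × ℝ) :
    fderivOp Λ complexGauge p = p.1 * fderivOp Λ (fun q => conj q.1) p
      + conj p.1 * fderivOp Λ (fun q => q.1) p + I * fderivOp Λ (fun q => (q.2 : ℂ)) p := by
  rw [show complexGauge = fun q => q.1 * conj q.1 + I * q.2 from funext complexGauge_eq,
    fderivOp_add _ (by fun_prop) (by fun_prop), fderivOp_mul _ (by fun_prop) (by fun_prop),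
    fderivOp_const_mul _ (by fun_prop)]

theorem Zop_complexGauge (p : ℂ × ℝ) : Zop complexGauge p = 0 := by
  rw [Zop_eq_fderivOp, fderivOp_complexGauge]
  simp only [← Zop_eq_fderivOp]
  rw [Zop_conj, Zbar_fst, Zop_fst, Zop_ofReal_snd, map_zero]
  linear_combination conj p.1 * I_mul_I

theorem Zbar_complexGauge (p : ℂ × ℝ) : Zbar complexGauge p = 2 * p.1 := by
  rw [Zbar_eq_fderivOp, fderivOp_complexGauge]
  simp only [← Zbar_eq_fderivOp]
  rw [Zbar_conj, Zop_fst, Zbar_fst, Zbar_ofReal_snd, map_one]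
  linear_combination -p.1 * I_mul_I

theorem complexGauge_ne_zero {q : ℂ × ℝ} (hq : q ≠ 0) : complexGauge q ≠ 0 := by
  intro h
  have hre : q.1 = 0 := by simpa [complexGauge, ← ofReal_pow] using congrArg re h
  have him : q.2 = 0 := by simpa [complexGauge, ← ofReal_pow] using congrArg im h
  exact hq (Prod.ext hre him)

theorem Zop_inv_complexGauge {p : ℂ × ℝ} (hp : p ≠ 0) :
    Zop (fun q => (complexGauge q)⁻¹) p = 0 := by
  rw [Zop_eq_fderivOp, fderivOp_comp _ (hasDerivAt_inv (complexGauge_ne_zero hp))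
    (differentiable_complexGauge p), ← Zop_eq_fderivOp, Zop_complexGauge, mul_zero]

theorem normSq_complexGauge (q : ℂ × ℝ) : normSq (complexGauge q) = ‖q.1‖ ^ 4 + q.2 ^ 2 := by
  rw [complexGauge, mul_comm I, ← ofReal_pow, normSq_add_mul_I]
  ring

theorem ofReal_log_eq_log_mul_conj_complexGauge (q : ℂ × ℝ) :
    ((Real.log (‖q.1‖ ^ 4 + q.2 ^ 2) : ℝ) : ℂ)
      = log (complexGauge q * conj (complexGauge q)) := by
  rw [mul_conj, normSq_complexGauge, ofReal_log (by positivity)]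

theorem Zbar_log_normSq_complexGauge {p : ℂ × ℝ} (hp : p ≠ 0) :
    Zbar (fun q => ((Real.log (‖q.1‖ ^ 4 + q.2 ^ 2) : ℝ) : ℂ)) p
      = 2 * p.1 * (complexGauge p)⁻¹ := by
  have hG := complexGauge_ne_zero hp
  have hslit : complexGauge p * conj (complexGauge p) ∈ slitPlane := by
    rw [mul_conj]
    exact ofReal_mem_slitPlane.2 (normSq_pos.2 hG)
  rw [funext ofReal_log_eq_log_mul_conj_complexGauge, Zbar_eq_fderivOp,
    fderivOp_comp (f := fun q => complexGauge q * conj (complexGauge q)) _ (hasDerivAt_log hslit)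
      (by fun_prop),
    fderivOp_mul _ (by fun_prop) (by fun_prop)]
  simp only [← Zbar_eq_fderivOp]
  rw [Zbar_conj, Zop_complexGauge, Zbar_complexGauge, map_zero, mul_zero, zero_add]
  have hG' : conj (complexGauge p) ≠ 0 := (map_ne_zero _).2 hG
  field_simp

theorem Zop_Zbar_log_normSq_complexGauge {p : ℂ × ℝ} (hp : p ≠ 0) :
    Zop (Zbar (fun q => ((Real.log (‖q.1‖ ^ 4 + q.2 ^ 2) : ℝ) : ℂ))) p
      = 2 * (complexGauge p)⁻¹ := by
  have hG := complexGauge_ne_zero hp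
  have hloc : Zbar (fun q => ((Real.log (‖q.1‖ ^ 4 + q.2 ^ 2) : ℝ) : ℂ))
      =ᶠ[nhds p] fun q => 2 * (q.1 * (complexGauge q)⁻¹) :=
    (eventually_ne_nhds hp).mono fun q hq => by
      rw [Zbar_log_normSq_complexGauge hq, mul_assoc]
  rw [Zop_eq_fderivOp, fderivOp_congr _ hloc,
    fderivOp_const_mul _ (by fun_prop (disch := exact hG)),
    fderivOp_mul _ (by fun_prop) (by fun_prop (disch := exact hG))]
  simp only [← Zop_eq_fderivOp]
  rw [Zop_inv_complexGauge hp, Zop_fst, mul_zero, zero_add, mul_one]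

/-- For (z,u) ≠ (0,0): Z(1/(|z|²+iu)) = 0, and consequently
Z(Z(Z̄(log(|z|⁴+u²)))) = 0. -/
theorem Z_annihilates_inverse (p : ℂ × ℝ) (hp : p ≠ 0) :
    Zop (fun q => 1 / (((‖q.1‖ : ℝ) : ℂ) ^ 2 + Complex.I * (q.2 : ℂ))) p = 0 ∧
    Zop (Zop (Zbar (fun q =>
        ((Real.log (‖q.1‖ ^ 4 + q.2 ^ 2) : ℝ) : ℂ)))) p = 0 := by
  have hloc : Zop (Zbar (fun q => ((Real.log (‖q.1‖ ^ 4 + q.2 ^ 2) : ℝ) : ℂ)))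
      =ᶠ[nhds p] fun q => 2 * (complexGauge q)⁻¹ :=
    (eventually_ne_nhds hp).mono fun q hq => Zop_Zbar_log_normSq_complexGauge hq
  refine ⟨by simpa only [one_div, complexGauge] using Zop_inv_complexGauge hp, ?_⟩
  rw [Zop_eq_fderivOp, fderivOp_congr _ hloc,
    fderivOp_const_mul _ (by fun_prop (disch := exact complexGauge_ne_zero hp)),
    ← Zop_eq_fderivOp, Zop_inv_complexGauge hp, mul_zero]
end
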